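/- arXiv:1704.08863 — 2 statements merged into one kernel-verified Lean document; each statement's English description precedes it below -/
import Mathlib

section
/- Let u > 0 and let μ be the Gaussian measure on ℝ with mean 0 and variance u². Then the variance of the function y ↦ max(y, 0) with respect to μ, namely ∫ (max(y,0))² dμ(y) − (∫ max(y,0) dμ(y))², equals u² (1/2 − 1/(2π)) = u² (π − 1)/(2π). -/
/-!
The Gaussian `N(0, u²)` is invariant under `y ↦ -y`, and `max(y,0)² + max(-y,0)² = y²`, so the
second moment of the ReLU is half the variance, `u² / 2`. Since `max(u y, 0) = u max(y, 0)`, its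
mean is `u` times the mean for the standard Gaussian, which is
`(2π)^(-1/2) ∫₀^∞ y e^(-y²/2) dy = (2π)^(-1/2)`.
-/

open MeasureTheory ProbabilityTheory NNReal Real Set

lemma integral_mul_exp_neg_mul_sq_Ioi {b : ℝ} (hb : 0 < b) :
    ∫ x in Ioi (0 : ℝ), x * exp (-b * x ^ 2) = (2 * b)⁻¹ := by
  have h := integral_rpow_mul_exp_neg_mul_rpow two_pos (by norm_num : (-1 : ℝ) < 1) hb
  norm_num [Real.rpow_two, Gamma_one] at h
  simp only [neg_mul, h, Real.rpow_neg_one]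
  ring

lemma integral_mul_max_zero_eq_setIntegral_Ioi (μ : Measure ℝ) (f : ℝ → ℝ) :
    ∫ y, f y * max y 0 ∂μ = ∫ y in Ioi 0, f y * y ∂μ := by
  rw [← setIntegral_eq_integral_of_forall_compl_eq_zero (s := Ioi 0)]
  · exact setIntegral_congr_fun measurableSet_Ioi fun y hy ↦ by rw [max_eq_left hy.le]
  · intro y hy
    rw [max_eq_right (not_lt.1 hy), mul_zero]

lemma integral_max_zero_sq_of_isNegInvariant {μ : Measure ℝ} [μ.IsNegInvariant]
    (hint : Integrable (fun y ↦ y ^ 2) μ) :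
    ∫ y, max y 0 ^ 2 ∂μ = (∫ y, y ^ 2 ∂μ) / 2 := by
  have hpos : Integrable (fun y ↦ max y 0 ^ 2) μ :=
    hint.mono' (by fun_prop) (ae_of_all _ fun y ↦ by
      rw [norm_pow, Real.norm_eq_abs, sq_abs]
      rcases le_total y 0 with h | h <;> simp [h, sq_nonneg])
  have hsplit (y : ℝ) : max y 0 ^ 2 + max (-y) 0 ^ 2 = y ^ 2 := by
    rcases le_total y 0 with h | h <;> simp [h]
  have hsum := integral_add hpos hpos.comp_neg
  simp only [hsplit, integral_neg_eq_self (fun y ↦ max y 0 ^ 2) μ] at hsum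
  linarith

instance isNegInvariant_gaussianReal_zero (v : ℝ≥0) : (gaussianReal 0 v).IsNegInvariant :=
  ⟨by rw [Measure.neg_def, gaussianReal_map_neg, neg_zero]⟩

lemma integral_sq_gaussianReal_zero (v : ℝ≥0) : ∫ y, y ^ 2 ∂gaussianReal 0 v = v := by
  rw [← variance_fun_id_gaussianReal, variance_of_integral_eq_zero (by fun_prop)]
  exact integral_id_gaussianReal

lemma integral_max_zero_sq_gaussianReal_zero (v : ℝ≥0) :
    ∫ y, max y 0 ^ 2 ∂gaussianReal 0 v = v / 2 := by
  rw [integral_max_zero_sq_of_isNegInvariant (memLp_id_gaussianReal 2).integrable_sq,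
    integral_sq_gaussianReal_zero]

lemma gaussianReal_zero_eq_map_sqrt_mul (v : ℝ≥0) :
    gaussianReal 0 v = (gaussianReal 0 1).map (√v * ·) := by
  rw [gaussianReal_map_const_mul, mul_zero, mul_one]
  congr
  exact NNReal.eq (Real.sq_sqrt v.coe_nonneg).symm

lemma integral_max_zero_gaussianReal_zero_one :
    ∫ y, max y 0 ∂gaussianReal 0 1 = (√(2 * π))⁻¹ := by
  have hpdf (y : ℝ) :
      gaussianPDFReal 0 1 y * y = (√(2 * π))⁻¹ * (y * exp (-(1 / 2) * y ^ 2)) := by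
    rw [gaussianPDFReal]
    push_cast
    ring_nf
  simp_rw [integral_gaussianReal_eq_integral_smul one_ne_zero, smul_eq_mul,
    integral_mul_max_zero_eq_setIntegral_Ioi, hpdf, integral_const_mul,
    integral_mul_exp_neg_mul_sq_Ioi one_half_pos]
  norm_num

lemma integral_max_zero_gaussianReal_zero (v : ℝ≥0) :
    ∫ y, max y 0 ∂gaussianReal 0 v = √v / √(2 * π) := by
  have hscale (y : ℝ) : max (√v * y) 0 = √v * max y 0 := by
    rw [mul_max_of_nonneg _ _ (Real.sqrt_nonneg _), mul_zero]
  rw [gaussianReal_zero_eq_map_sqrt_mul, integral_map (by fun_prop) (by fun_prop)]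
  simp_rw [hscale]
  rw [integral_const_mul, integral_max_zero_gaussianReal_zero_one, div_eq_mul_inv]

theorem relu_variance_gaussian_general (u : ℝ≥0) :
    (∫ y, (max y 0) ^ 2 ∂(gaussianReal 0 (u ^ 2))) -
      (∫ y, max y 0 ∂(gaussianReal 0 (u ^ 2))) ^ 2 =
      (u : ℝ) ^ 2 * ((Real.pi - 1) / (2 * Real.pi)) := by
  rw [integral_max_zero_sq_gaussianReal_zero, integral_max_zero_gaussianReal_zero,
    NNReal.coe_pow, Real.sqrt_sq u.coe_nonneg, div_pow, Real.sq_sqrt (by positivity)]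
  field_simp

theorem relu_variance_gaussian (u : ℝ≥0) (hu : 0 < u) :
    (∫ y, (max y 0) ^ 2 ∂(gaussianReal 0 (u ^ 2))) -
      (∫ y, max y 0 ∂(gaussianReal 0 (u ^ 2))) ^ 2 =
      (u : ℝ) ^ 2 * ((Real.pi - 1) / (2 * Real.pi)) :=
  relu_variance_gaussian_general u
end

section
/- Let u > 0 and let μ be the Gaussian measure on ℝ with mean 0 and variance u². The variance of y ↦ max(y, 0) with respect to μ equals 1 if and only if u² = 2π/(π − 1). -/
/-!
On `(0, ∞)` the Gaussian density of variance `v` times `xⁿ` is a Gamma-type integrand, so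
`E[max(X, 0)ⁿ] = (2v)^((n+1)/2) Γ((n+1)/2) / (2√(2πv))`. This gives `E[max(X, 0)] = √(v / 2π)`
and `E[max(X, 0)²] = v / 2`, hence the variance `v (π - 1) / (2π)`, which is `1` exactly when
`v = 2π / (π - 1)`.
-/

open MeasureTheory ProbabilityTheory NNReal

open Real Set

lemma integral_max_zero_pow_gaussianReal {v : ℝ≥0} (hv : v ≠ 0) {n : ℕ} (hn : n ≠ 0) :
    ∫ x, (max x 0) ^ n ∂gaussianReal 0 v =
      (2 * v) ^ (((n : ℝ) + 1) / 2) * Gamma (((n : ℝ) + 1) / 2) / (2 * √(2 * π * v)) := by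
  have h2v : (0 : ℝ) < 2 * v := by positivity
  have h_integrand : (fun x ↦ gaussianPDFReal 0 v x • (max x 0) ^ n) = (Ioi 0).indicator
      fun x ↦ (√(2 * π * v))⁻¹ * (x ^ (n : ℝ) * exp (-(2 * v : ℝ)⁻¹ * x ^ (2 : ℝ))) := by
    ext x
    rcases lt_or_ge 0 x with hx | hx
    · simp only [indicator_of_mem (mem_Ioi.mpr hx), gaussianPDFReal, max_eq_left hx.le,
        smul_eq_mul, Real.rpow_natCast, Real.rpow_ofNat, sub_zero]
      ring_nf
    · simp [indicator_of_notMem (notMem_Ioi.mpr hx), max_eq_right hx, hn]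
  rw [integral_gaussianReal_eq_integral_smul hv, h_integrand, integral_indicator measurableSet_Ioi,
    integral_const_mul,
    integral_rpow_mul_exp_neg_mul_rpow two_pos (by linarith [n.cast_nonneg' (α := ℝ)])
      (inv_pos.mpr h2v), inv_rpow h2v.le, neg_div, Real.rpow_neg h2v.le, inv_inv]
  ring

lemma integral_max_zero_gaussianReal {v : ℝ≥0} (hv : v ≠ 0) :
    ∫ x, max x 0 ∂gaussianReal 0 v = √(v / (2 * π)) := by
  have h := integral_max_zero_pow_gaussianReal hv one_ne_zero
  simp only [pow_one] at h
  rw [h, Real.sqrt_div' _ (by positivity)]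
  norm_num
  field_simp
  exact (Real.sq_sqrt v.coe_nonneg).symm

lemma integral_max_zero_sq_gaussianReal {v : ℝ≥0} (hv : v ≠ 0) :
    ∫ x, (max x 0) ^ 2 ∂gaussianReal 0 v = v / 2 := by
  have h2v : (0 : ℝ) < 2 * v := by positivity
  have h_rpow : (2 * v : ℝ) ^ (((2 : ℕ) + 1) / 2 : ℝ) = 2 * v * √(2 * v) := by
    rw [show (((2 : ℕ) + 1) / 2 : ℝ) = 1 + 1 / 2 by norm_num, Real.rpow_add h2v, Real.rpow_one,
      Real.sqrt_eq_rpow]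
  have h_gamma : Gamma (((2 : ℕ) + 1) / 2 : ℝ) = √π / 2 := by
    rw [show (((2 : ℕ) + 1) / 2 : ℝ) = 1 / 2 + 1 by norm_num, Gamma_add_one (by norm_num),
      Gamma_one_half_eq]
    ring
  rw [integral_max_zero_pow_gaussianReal hv two_ne_zero, h_rpow, h_gamma,
    show 2 * π * v = 2 * v * π by ring, Real.sqrt_mul h2v.le]
  field_simp

lemma integral_max_zero_sq_sub_sq_integral_gaussianReal (v : ℝ≥0) :
    (∫ x, (max x 0) ^ 2 ∂gaussianReal 0 v) - (∫ x, max x 0 ∂gaussianReal 0 v) ^ 2 =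
      v * (π - 1) / (2 * π) := by
  rcases eq_or_ne v 0 with rfl | hv
  · simp [gaussianReal_zero_var]
  rw [integral_max_zero_sq_gaussianReal hv, integral_max_zero_gaussianReal hv,
    Real.sq_sqrt (by positivity)]
  field_simp

theorem relu_variance_eq_one_iff_general (u : ℝ≥0) :
    (∫ y, (max y 0) ^ 2 ∂(gaussianReal 0 (u ^ 2))) -
        (∫ y, max y 0 ∂(gaussianReal 0 (u ^ 2))) ^ 2 = 1 ↔
      (u : ℝ) ^ 2 = 2 * Real.pi / (Real.pi - 1) := by
  have hπ : 0 < π - 1 := by linarith [pi_gt_three]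
  rw [integral_max_zero_sq_sub_sq_integral_gaussianReal, div_eq_one_iff_eq (by positivity),
    eq_div_iff hπ.ne']
  norm_cast

theorem relu_variance_eq_one_iff (u : ℝ≥0) (hu : 0 < u) :
    (∫ y, (max y 0) ^ 2 ∂(gaussianReal 0 (u ^ 2))) -
        (∫ y, max y 0 ∂(gaussianReal 0 (u ^ 2))) ^ 2 = 1 ↔
      (u : ℝ) ^ 2 = 2 * Real.pi / (Real.pi - 1) :=
  relu_variance_eq_one_iff_general u
end
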